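/- The bilinear form s(A,B) = Tr(A[d,B]) is well defined on u_res × u_res and is a continuous Lie algebra 2-cocycle: s is antisymmetric and satisfies s([A,B],C) + s([B,C],A) + s([C,A],B) = 0 for all A, B, C ∈ u_res. -/

import Mathlib

open ContinuousLinearMap

noncomputable section

/-- `T` is a Hilbert–Schmidt operator: `∑ᵢ ‖T eᵢ‖² < ∞` for some Hilbert basis `(eᵢ)`. -/
def IsHS {H : Type*} [NormedAddCommGroup H] [InnerProductSpace ℂ H]
    (T : H →L[ℂ] H) : Prop :=
  ∃ (ι : Type) (b : HilbertBasis ι ℂ H), Summable fun i => ‖T (b i)‖ ^ 2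

/-- `T` is trace class: `T` is a product of two Hilbert–Schmidt operators. -/
def IsTC {H : Type*} [NormedAddCommGroup H] [InnerProductSpace ℂ H]
    (T : H →L[ℂ] H) : Prop :=
  ∃ A B : H →L[ℂ] H, IsHS A ∧ IsHS B ∧ T = A * B

/-- The operator `d = i(p₊ - p₋)` associated to the orthogonal projection `P = p₊`
(so `p₋ = 1 - P`). -/
def dOp {H : Type*} [NormedAddCommGroup H] [InnerProductSpace ℂ H]
    (P : H →L[ℂ] H) : H →L[ℂ] H :=
  Complex.I • (P - (1 - P))

/-- The Schwinger-type cocycle `s(A,B) = Tr(A[d,B])`, computed along a Hilbert basis adapted to the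
decomposition `H = H₊ ⊕ H₋`. -/
def sForm {H : Type*} [NormedAddCommGroup H] [InnerProductSpace ℂ H]
    (P : H →L[ℂ] H) {ι : Type*} (b : HilbertBasis ι ℂ H) (A B : H →L[ℂ] H) : ℂ :=
  ∑' i, (inner ℂ (b i) ((A * (dOp P * B - B * dOp P)) (b i)) : ℂ)

/-!
Since `d² = -1`, `d` anticommutes with every `[d, X]`, which gives the operator identity
`[d, M] d [d, N] = M [d, N] - d (M [d, N]) d`; along a basis of eigenvectors of `d` the diagonal
entries of `d T d` are those of `-T`. So the diagonal of `M [d, N]` is half that of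
`[d, M] · d [d, N]`, a product of two Hilbert–Schmidt operators: it is summable, and
`s(M, N) = ½ Tr([d, M] d [d, N])`. The trace of such a product is an absolutely convergent double
sum, hence cyclic, which gives antisymmetry. For the cocycle identity expand
`[d, [A, B]] = [[d, A], B] + [A, [d, B]]`; the twelve resulting traces cancel in pairs, again by
cyclicity.
-/

open scoped InnerProductSpace

section HilbertSchmidt

variable {H : Type*} [NormedAddCommGroup H] [InnerProductSpace ℂ H]

theorem HilbertBasis.hasSum_norm_inner_sq {ι : Type*} (b : HilbertBasis ι ℂ H) (x : H) :
    HasSum (fun i => ‖⟪b i, x⟫_ℂ‖ ^ 2) (‖x‖ ^ 2) := by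
  simpa only [ENNReal.toReal_ofNat, Real.rpow_two, HilbertBasis.repr_apply_apply,
    LinearIsometryEquiv.norm_map] using lp.hasSum_norm (p := 2) (by norm_num) (b.repr x)

theorem IsHS.mul_left {T : H →L[ℂ] H} (hT : IsHS T) (L : H →L[ℂ] H) : IsHS (L * T) := by
  obtain ⟨ι, e, he⟩ := hT
  refine ⟨ι, e, (he.mul_left (‖L‖ ^ 2)).of_nonneg_of_le (fun _ => by positivity)
    fun i => ?_⟩
  rw [← mul_pow]
  exact pow_le_pow_left₀ (norm_nonneg _) (L.le_opNorm _) 2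

variable [CompleteSpace H]

/-- Both sums equal `∑ i j, |⟪T eᵢ, fⱼ⟫|²`. -/
theorem summable_norm_adjoint_apply_sq {ι κ : Type*} (e : HilbertBasis ι ℂ H)
    (f : HilbertBasis κ ℂ H) {T : H →L[ℂ] H} (hT : Summable fun i => ‖T (e i)‖ ^ 2) :
    Summable fun j => ‖adjoint T (f j)‖ ^ 2 := by
  set g : κ × ι → ℝ := fun p => ‖⟪f p.1, T (e p.2)⟫_ℂ‖ ^ 2
  have hg : 0 ≤ g := fun _ => sq_nonneg _
  have hrow : ∀ j, HasSum (fun i => g (j, i)) (‖adjoint T (f j)‖ ^ 2) := fun j => by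
    simpa [g, adjoint_inner_right, norm_inner_symm] using
      e.hasSum_norm_inner_sq (adjoint T (f j))
  have hcol : ∀ i, HasSum (fun j => g (j, i)) (‖T (e i)‖ ^ 2) := fun i =>
    f.hasSum_norm_inner_sq (T (e i))
  have hswap : Summable fun p : ι × κ => g (p.2, p.1) :=
    (summable_prod_of_nonneg (f := fun p : ι × κ => g (p.2, p.1)) fun _ => hg _).mpr
      ⟨fun i => (hcol i).summable, hT.congr fun i => ((hcol i).tsum_eq).symm⟩
  have hsum : Summable g := (Equiv.prodComm ι κ).summable_iff.mp hswap
  exact ((summable_prod_of_nonneg hg).mp hsum).2.congr fun j => (hrow j).tsum_eq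

theorem IsHS.adjoint {T : H →L[ℂ] H} (hT : IsHS T) : IsHS (adjoint T) := by
  obtain ⟨ι, e, he⟩ := hT
  exact ⟨ι, e, summable_norm_adjoint_apply_sq e e he⟩

theorem IsHS.summable_norm_sq {T : H →L[ℂ] H} (hT : IsHS T) {κ : Type*}
    (f : HilbertBasis κ ℂ H) : Summable fun j => ‖T (f j)‖ ^ 2 := by
  obtain ⟨ι, e, he⟩ := hT.adjoint
  simpa only [adjoint_adjoint] using summable_norm_adjoint_apply_sq e f he

theorem IsHS.mul_right {T : H →L[ℂ] H} (hT : IsHS T) (L : H →L[ℂ] H) : IsHS (T * L) := by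
  have h := (hT.adjoint.mul_left (ContinuousLinearMap.adjoint L)).adjoint
  rwa [← star_eq_adjoint, ← star_eq_adjoint, ← star_eq_adjoint, star_mul, star_star,
    star_star] at h

end HilbertSchmidt

section TraceAlongBasis

variable {H : Type*} [NormedAddCommGroup H] [InnerProductSpace ℂ H] {ι : Type*}
  (b : HilbertBasis ι ℂ H)

def diagEntry (T : H →L[ℂ] H) (i : ι) : ℂ :=
  ⟪b i, T (b i)⟫_ℂ

/-- The sum of the diagonal entries along `b`; it is `0` when they are not summable. -/
def traceAlong (T : H →L[ℂ] H) : ℂ :=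
  ∑' i, diagEntry b T i

theorem diagEntry_add (S T : H →L[ℂ] H) :
    diagEntry b (S + T) = diagEntry b S + diagEntry b T :=
  funext fun _ => inner_add_right _ _ _

theorem diagEntry_sub (S T : H →L[ℂ] H) :
    diagEntry b (S - T) = diagEntry b S - diagEntry b T :=
  funext fun _ => inner_sub_right _ _ _

theorem traceAlong_neg (T : H →L[ℂ] H) : traceAlong b (-T) = -traceAlong b T := by
  simp only [traceAlong, diagEntry, neg_apply, inner_neg_right, tsum_neg]

variable [CompleteSpace H]

theorem IsHS.summable_norm_inner_sq {T : H →L[ℂ] H} (hT : IsHS T) :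
    Summable fun p : ι × ι => ‖⟪b p.2, T (b p.1)⟫_ℂ‖ ^ 2 :=
  (summable_prod_of_nonneg fun _ => sq_nonneg _).mpr
    ⟨fun i => (b.hasSum_norm_inner_sq (T (b i))).summable,
      (hT.summable_norm_sq b).congr fun i => (b.hasSum_norm_inner_sq (T (b i))).tsum_eq.symm⟩

/-- The double sum `∑ i j, Sᵢⱼ Tⱼᵢ` converges absolutely: both matrices are square summable. -/
theorem hasSum_diagEntry_mul {S T : H →L[ℂ] H} (hS : IsHS S) (hT : IsHS T) :
    HasSum (diagEntry b (S * T))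
      (∑' p : ι × ι, ⟪b p.1, S (b p.2)⟫_ℂ * ⟪b p.2, T (b p.1)⟫_ℂ) := by
  have hS' : Summable fun p : ι × ι => ‖⟪b p.1, S (b p.2)⟫_ℂ‖ ^ 2 :=
    (Equiv.prodComm ι ι).summable_iff.mp (hS.summable_norm_inner_sq b)
  have hsum :
      Summable fun p : ι × ι => ⟪b p.1, S (b p.2)⟫_ℂ * ⟪b p.2, T (b p.1)⟫_ℂ := by
    refine .of_norm_bounded ((hS'.add (hT.summable_norm_inner_sq b)).div_const 2)
      fun p => ?_
    rw [norm_mul]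
    nlinarith [sq_nonneg (‖⟪b p.1, S (b p.2)⟫_ℂ‖ - ‖⟪b p.2, T (b p.1)⟫_ℂ‖)]
  refine hsum.hasSum.prod_fiberwise fun i => ?_
  simpa only [adjoint_inner_left, diagEntry, mul_apply_eq_comp] using
    b.hasSum_inner_mul_inner (adjoint S (b i)) (T (b i))

theorem summable_diagEntry_mul {S T : H →L[ℂ] H} (hS : IsHS S) (hT : IsHS T) :
    Summable (diagEntry b (S * T)) :=
  (hasSum_diagEntry_mul b hS hT).summable

theorem traceAlong_mul_comm {S T : H →L[ℂ] H} (hS : IsHS S) (hT : IsHS T) :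
    traceAlong b (S * T) = traceAlong b (T * S) := by
  rw [traceAlong, (hasSum_diagEntry_mul b hS hT).tsum_eq, traceAlong,
    (hasSum_diagEntry_mul b hT hS).tsum_eq, ← (Equiv.prodComm ι ι).tsum_eq]
  exact tsum_congr fun p => mul_comm _ _

theorem traceAlong_mul_mul_of_anticomm {d x y : H →L[ℂ] H} (M : H →L[ℂ] H) (hx : IsHS x)
    (hy : IsHS y) (hdy : d * y = -(y * d)) :
    traceAlong b (x * M * (d * y)) = -traceAlong b (M * y * (d * x)) := by
  rw [mul_assoc, traceAlong_mul_comm b hx ((hy.mul_left d).mul_left M),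
    show M * (d * y) * x = -(M * y * (d * x)) by rw [hdy]; noncomm_ring, traceAlong_neg]

theorem traceAlong_sub_add_sub_mul {u v w : H →L[ℂ] H} (hu : IsHS u) (hv : IsHS v)
    (hw : IsHS w) (A B D : H →L[ℂ] H) :
    traceAlong b ((u * B - B * u + (A * v - v * A)) * (D * w)) =
      traceAlong b (u * B * (D * w)) - traceAlong b (B * u * (D * w)) +
        (traceAlong b (A * v * (D * w)) - traceAlong b (v * A * (D * w))) := by
  have hDw := hw.mul_left D
  have h₁ := summable_diagEntry_mul b (hu.mul_right B) hDw
  have h₂ := summable_diagEntry_mul b (hu.mul_left B) hDw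
  have h₃ := summable_diagEntry_mul b (hv.mul_left A) hDw
  have h₄ := summable_diagEntry_mul b (hv.mul_right A) hDw
  simp only [traceAlong, add_mul, sub_mul, diagEntry_add, diagEntry_sub, Pi.add_apply,
    Pi.sub_apply]
  rw [(h₁.sub h₂).tsum_add (h₃.sub h₄), h₁.tsum_sub h₂, h₃.tsum_sub h₄]

end TraceAlongBasis

section SquareRootOfMinusOne

variable {R : Type*} [Ring R] {d : R}

theorem mul_commutator_eq_neg (hd : d * d = -1) (M : R) :
    d * (d * M - M * d) = -((d * M - M * d) * d) := by
  rw [← sub_eq_zero, sub_neg_eq_add,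
    show d * (d * M - M * d) + (d * M - M * d) * d = d * d * M - M * (d * d) by noncomm_ring, hd]
  noncomm_ring

theorem commutator_mul_mul_commutator (hd : d * d = -1) (M N : R) :
    (d * M - M * d) * (d * (d * N - N * d)) =
      M * (d * N - N * d) - d * (M * (d * N - N * d)) * d := by
  calc (d * M - M * d) * (d * (d * N - N * d))
      = d * M * (d * (d * N - N * d)) - M * (d * d) * (d * N - N * d) := by noncomm_ring
    _ = M * (d * N - N * d) - d * (M * (d * N - N * d)) * d := by
      rw [mul_commutator_eq_neg hd, hd]; noncomm_ring

end SquareRootOfMinusOne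

section dOp

variable {H : Type*} [NormedAddCommGroup H] [InnerProductSpace ℂ H] {P : H →L[ℂ] H}

theorem dOp_mul_self (hP2 : P * P = P) : dOp P * dOp P = -1 := by
  have h : (P - (1 - P)) * (P - (1 - P)) = 1 := by
    rw [show (P - (1 - P)) * (P - (1 - P)) = 4 * (P * P) - 4 * P + 1 by noncomm_ring, hP2]
    noncomm_ring
  rw [dOp, smul_mul_smul_comm, h, Complex.I_mul_I, neg_one_smul]

theorem exists_dOp_apply_eq_smul {e : H} (he : P e = e ∨ P e = 0) :
    ∃ c : ℂ, ‖c‖ = 1 ∧ dOp P e = c • e := by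
  rcases he with he | he
  · exact ⟨Complex.I, by simp, by simp [dOp, he]⟩
  · exact ⟨-Complex.I, by simp, by simp [dOp, he]⟩

variable [CompleteSpace H]

theorem adjoint_dOp (hP : IsSelfAdjoint P) : adjoint (dOp P) = -dOp P := by
  rw [← star_eq_adjoint, dOp, star_smul, star_sub, star_sub, star_one, hP.star_eq,
    Complex.star_def, Complex.conj_I, neg_smul]

/-- `d` is skew-adjoint and acts on `e` by a unimodular scalar `c`,
so `⟪e, d S d e⟫ = -|c|² ⟪e, S e⟫`. -/
theorem inner_dOp_mul_mul_dOp (hP : IsSelfAdjoint P) {e : H} (he : P e = e ∨ P e = 0)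
    (S : H →L[ℂ] H) : ⟪e, (dOp P * S * dOp P) e⟫_ℂ = -⟪e, S e⟫_ℂ := by
  obtain ⟨c, hc, hde⟩ := exists_dOp_apply_eq_smul he
  rw [mul_apply_eq_comp, mul_apply_eq_comp, ← adjoint_inner_left, adjoint_dOp hP, hde,
    neg_apply, hde, inner_neg_left, map_smul, inner_smul_left, inner_smul_right,
    ← mul_assoc, RCLike.conj_mul, hc]
  simp

end dOp

section sForm

variable {H : Type*} [NormedAddCommGroup H] [InnerProductSpace ℂ H] [CompleteSpace H]
  {P : H →L[ℂ] H} {ι : Type*} {b : HilbertBasis ι ℂ H}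

theorem diagEntry_mul_commutator_dOp (hP : IsSelfAdjoint P) (hP2 : P * P = P)
    (hb : ∀ i, P (b i) = b i ∨ P (b i) = 0) (M N : H →L[ℂ] H) :
    diagEntry b (M * (dOp P * N - N * dOp P)) = fun i => (1 / 2 : ℂ) *
      diagEntry b ((dOp P * M - M * dOp P) * (dOp P * (dOp P * N - N * dOp P))) i := by
  funext i
  rw [diagEntry, diagEntry, commutator_mul_mul_commutator (dOp_mul_self hP2), sub_apply,
    inner_sub_right, inner_dOp_mul_mul_dOp hP (hb i)]
  ring

theorem sForm_eq_half_traceAlong (hP : IsSelfAdjoint P) (hP2 : P * P = P)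
    (hb : ∀ i, P (b i) = b i ∨ P (b i) = 0) (M N : H →L[ℂ] H) :
    sForm P b M N = (1 / 2 : ℂ) *
      traceAlong b ((dOp P * M - M * dOp P) * (dOp P * (dOp P * N - N * dOp P))) := by
  rw [traceAlong, ← tsum_mul_left, ← diagEntry_mul_commutator_dOp hP hP2 hb]
  rfl

theorem sForm_antisymm (hP : IsSelfAdjoint P) (hP2 : P * P = P)
    (hb : ∀ i, P (b i) = b i ∨ P (b i) = 0) {M N : H →L[ℂ] H}
    (hM : IsHS (dOp P * M - M * dOp P)) (hN : IsHS (dOp P * N - N * dOp P)) :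
    sForm P b M N = -sForm P b N M := by
  set d := dOp P
  have hdM : (d * M - M * d) * d = -(d * (d * M - M * d)) := by
    rw [mul_commutator_eq_neg (dOp_mul_self hP2), neg_neg]
  have hswap : (d * M - M * d) * (d * (d * N - N * d)) =
      -((d * (d * M - M * d)) * (d * N - N * d)) := by
    rw [← mul_assoc, hdM, neg_mul]
  rw [sForm_eq_half_traceAlong hP hP2 hb, sForm_eq_half_traceAlong hP hP2 hb, hswap,
    traceAlong_neg, traceAlong_mul_comm b (hM.mul_left d) hN]
  ring

theorem sForm_cocycle (hP : IsSelfAdjoint P) (hP2 : P * P = P)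
    (hb : ∀ i, P (b i) = b i ∨ P (b i) = 0) {A B C : H →L[ℂ] H}
    (hA : IsHS (dOp P * A - A * dOp P)) (hB : IsHS (dOp P * B - B * dOp P))
    (hC : IsHS (dOp P * C - C * dOp P)) :
    sForm P b (A * B - B * A) C + sForm P b (B * C - C * B) A +
      sForm P b (C * A - A * C) B = 0 := by
  set d := dOp P
  have hd := dOp_mul_self hP2
  have hδ : ∀ X Y : H →L[ℂ] H, d * (X * Y - Y * X) - (X * Y - Y * X) * d =
      (d * X - X * d) * Y - Y * (d * X - X * d) + (X * (d * Y - Y * d) - (d * Y - Y * d) * X) :=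
    fun _ _ => by noncomm_ring
  rw [sForm_eq_half_traceAlong hP hP2 hb, sForm_eq_half_traceAlong hP hP2 hb,
    sForm_eq_half_traceAlong hP hP2 hb, hδ, hδ, hδ, traceAlong_sub_add_sub_mul b hA hB hC,
    traceAlong_sub_add_sub_mul b hB hC hA, traceAlong_sub_add_sub_mul b hC hA hB]
  linear_combination (1 / 2 : ℂ) *
    (traceAlong_mul_mul_of_anticomm b B hA hC (mul_commutator_eq_neg hd C) -
      traceAlong_mul_mul_of_anticomm b B hC hA (mul_commutator_eq_neg hd A) +
      traceAlong_mul_mul_of_anticomm b A hC hB (mul_commutator_eq_neg hd B) -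
      traceAlong_mul_mul_of_anticomm b A hB hC (mul_commutator_eq_neg hd C) +
      traceAlong_mul_mul_of_anticomm b C hB hA (mul_commutator_eq_neg hd A) -
      traceAlong_mul_mul_of_anticomm b C hA hB (mul_commutator_eq_neg hd B))

end sForm

theorem stmt11_general {H : Type*} [NormedAddCommGroup H] [InnerProductSpace ℂ H] [CompleteSpace H]
    (P : H →L[ℂ] H) (hP : IsSelfAdjoint P) (hP2 : P * P = P)
    {ι : Type*} (b : HilbertBasis ι ℂ H)
    (hb : ∀ i, P (b i) = b i ∨ P (b i) = 0)
    (A B C : H →L[ℂ] H)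
    (hA2 : IsHS (dOp P * A - A * dOp P))
    (hB2 : IsHS (dOp P * B - B * dOp P))
    (hC2 : IsHS (dOp P * C - C * dOp P)) :
    (Summable fun i => (inner ℂ (b i) ((A * (dOp P * B - B * dOp P)) (b i)) : ℂ)) ∧
    sForm P b A B = -sForm P b B A ∧
    sForm P b (A * B - B * A) C + sForm P b (B * C - C * B) A +
      sForm P b (C * A - A * C) B = 0 := by
  refine ⟨?_, sForm_antisymm hP hP2 hb hA2 hB2, sForm_cocycle hP hP2 hb hA2 hB2 hC2⟩
  have h := (summable_diagEntry_mul b hA2 (hB2.mul_left (dOp P))).mul_left (1 / 2 : ℂ)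
  rwa [← diagEntry_mul_commutator_dOp hP hP2 hb] at h

/-- `s(A,B) = Tr(A[d,B])` is well defined on `u_res × u_res` and is a Lie algebra 2-cocycle:
it is antisymmetric and satisfies the cocycle (Jacobi-type) identity. -/
theorem stmt11 {H : Type*} [NormedAddCommGroup H] [InnerProductSpace ℂ H] [CompleteSpace H]
    (P : H →L[ℂ] H) (hP : IsSelfAdjoint P) (hP2 : P * P = P)
    {ι : Type*} (b : HilbertBasis ι ℂ H)
    (hb : ∀ i, P (b i) = b i ∨ P (b i) = 0)
    (A B C : H →L[ℂ] H)
    (hA1 : star A = -A) (hA2 : IsHS (dOp P * A - A * dOp P))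
    (hB1 : star B = -B) (hB2 : IsHS (dOp P * B - B * dOp P))
    (hC1 : star C = -C) (hC2 : IsHS (dOp P * C - C * dOp P)) :
    (Summable fun i => (inner ℂ (b i) ((A * (dOp P * B - B * dOp P)) (b i)) : ℂ)) ∧
    sForm P b A B = -sForm P b B A ∧
    sForm P b (A * B - B * A) C + sForm P b (B * C - C * B) A +
      sForm P b (C * A - A * C) B = 0 :=
  stmt11_general P hP hP2 b hb A B C hA2 hB2 hC2
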